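/- arXiv:1604.02672 — 4 statements merged into one kernel-verified Lean document; each statement's English description precedes it below -/
import Mathlib

section
/- There exists a prime ideal P of C([0,1], ℝ) that contains no nonzero polynomial function, i.e., P is disjoint from the set of nonzero restrictions of real polynomials to [0,1]. -/
open Set Polynomial

abbrev I01 : Set ℝ := Set.Icc 0 1
abbrev R01 := C(I01, ℝ)

def evalHom (γ : I01) : R01 →+* ℝ where
  toFun f := f γ
  map_one' := rfl
  map_mul' _ _ := rfl
  map_zero' := rfl
  map_add' _ _ := rfl

/-!
The restriction map `ℝ[X] → C([0,1], ℝ)` is injective, since a polynomial vanishing on an infinite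
set is zero. The zero ideal is a minimal prime of the domain `ℝ[X]`, and minimal primes lie under
primes along injective ring maps; a prime `P` of `C([0,1], ℝ)` lying over `0` contains no nonzero
polynomial.
-/

theorem Polynomial.toContinuousMapOn_injective {R : Type*} [CommRing R] [IsDomain R]
    [TopologicalSpace R] [IsTopologicalSemiring R] {X : Set R} (hX : X.Infinite) :
    Function.Injective fun p : R[X] ↦ p.toContinuousMapOn X := by
  intro p q hpq
  refine p.eq_of_infinite_eval_eq q (hX.mono fun x hx ↦ ?_)
  simpa using congrArg (fun f : C(X, R) ↦ f ⟨x, hx⟩) hpq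

theorem stmt4 : ∃ P : Ideal R01, P.IsPrime ∧
    ∀ p : Polynomial ℝ, p.toContinuousMapOn I01 ≠ 0 → p.toContinuousMapOn I01 ∉ P := by
  let φ : ℝ[X] →+* R01 := toContinuousMapOnAlgHom I01
  have hφ : Function.Injective φ := toContinuousMapOn_injective (Icc_infinite zero_lt_one)
  obtain ⟨P, hP, hcomap⟩ := Ideal.exists_comap_eq_of_mem_minimalPrimes_of_injective hφ ⊥
    (by simp [IsDomain.minimalPrimes_eq_singleton_bot])
  refine ⟨P, hP, fun p hp hpP ↦ hp ?_⟩
  have hp0 : p ∈ P.comap φ := hpP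
  rw [hcomap, Ideal.mem_bot] at hp0
  subst hp0
  exact map_zero φ
end

section
/- If P is a prime ideal of C([0,1], ℝ) and γ₁ < γ₂ are two points in the common zero set V(P), then a contradiction follows; that is, V(P) cannot contain two distinct points. -/
open Set Polynomial

namespace ContinuousMap

variable {X : Type*} [TopologicalSpace X]

/-- The halves `(m - φ)⁺` and `(φ - m)⁺` around the midpoint `m` have disjoint supports. -/
theorem exists_mul_eq_zero_of_lt (φ : C(X, ℝ)) {a b : X} (hab : φ a < φ b) :
    ∃ f g : C(X, ℝ), f * g = 0 ∧ f a ≠ 0 ∧ g b ≠ 0 := by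
  set m := (φ a + φ b) / 2 with hm
  refine ⟨⟨fun x => max (m - φ x) 0, by fun_prop⟩, ⟨fun x => max (φ x - m) 0, by fun_prop⟩,
    ?_, ?_, ?_⟩
  · ext x
    rcases le_total (φ x) m with h | h <;> simp [h]
  · exact (lt_max_of_lt_left (by linarith)).ne'
  · exact (lt_max_of_lt_left (by linarith)).ne'

end ContinuousMap

theorem Ideal.IsPrime.apply_eq_of_forall_mem_eval_eq_zero {X : Type*} [TopologicalSpace X]
    {P : Ideal C(X, ℝ)} (hP : P.IsPrime) (φ : C(X, ℝ)) {a b : X}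
    (ha : ∀ f ∈ P, f a = 0) (hb : ∀ f ∈ P, f b = 0) : φ a = φ b := by
  have key : ∀ {x y : X}, (∀ f ∈ P, f x = 0) → (∀ f ∈ P, f y = 0) → ¬ φ x < φ y := by
    intro x y hx hy hxy
    obtain ⟨f, g, hfg, hfx, hgy⟩ := ContinuousMap.exists_mul_eq_zero_of_lt φ hxy
    rcases hP.mem_or_mem (hfg ▸ P.zero_mem) with hf | hg
    · exact hfx (hx f hf)
    · exact hgy (hy g hg)
  exact le_antisymm (not_lt.mp (key hb ha)) (not_lt.mp (key ha hb))

theorem stmt8 (P : Ideal R01) (hP : P.IsPrime) (γ₁ γ₂ : I01)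
    (h1 : ∀ f ∈ P, f γ₁ = 0) (h2 : ∀ f ∈ P, f γ₂ = 0) (hlt : γ₁ < γ₂) :
    False :=
  hlt.ne <| Subtype.ext <|
    hP.apply_eq_of_forall_mem_eval_eq_zero ⟨Subtype.val, continuous_subtype_val⟩ h1 h2
end

section
/- If P is a prime ideal of C([0,1], ℝ), then its common zero set V(P) has exactly one element. -/
open Set Polynomial

namespace ContinuousMap

variable {X 𝕜 : Type*} [TopologicalSpace X] [CompactSpace X] [T2Space X] [RCLike 𝕜]

/-- The common zero set of a maximal ideal is a single point, and a proper ideal lies in one. -/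
theorem exists_forall_mem_apply_eq_zero {I : Ideal C(X, 𝕜)} (hI : I ≠ ⊤) :
    ∃ x : X, ∀ f ∈ I, f x = 0 := by
  obtain ⟨M, hM, hIM⟩ := I.exists_le_maximal hI
  obtain ⟨x, hx⟩ := setOfIdeal_eq_compl_singleton M
  refine ⟨x, fun f hf => ?_⟩
  have hxM : x ∉ setOfIdeal M := by simp [hx]
  by_contra hfx
  exact hxM (mem_setOfIdeal.2 ⟨f, hIM hf, hfx⟩)

/-- Functions supported in disjoint open neighbourhoods of `x` and `y`. -/
theorem exists_mul_eq_zero_apply_ne_zero {x y : X} (hxy : x ≠ y) :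
    ∃ f g : C(X, 𝕜), f * g = 0 ∧ f x ≠ 0 ∧ g y ≠ 0 := by
  obtain ⟨U, V, hU, hV, hxU, hyV, hUV⟩ := t2_separation hxy
  obtain ⟨f, hfU, hfx⟩ :=
    mem_setOfIdeal.1 ((setOfIdeal_ofSet_of_isOpen (𝕜 := 𝕜) hU).symm ▸ hxU)
  obtain ⟨g, hgV, hgy⟩ :=
    mem_setOfIdeal.1 ((setOfIdeal_ofSet_of_isOpen (𝕜 := 𝕜) hV).symm ▸ hyV)
  refine ⟨f, g, ?_, hfx, hgy⟩
  ext t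
  by_cases htU : t ∈ U
  · have htV : t ∉ V := hUV.notMem_of_mem_left htU
    simp [mem_idealOfSet.1 hgV htV]
  · simp [mem_idealOfSet.1 hfU htU]

theorem _root_.Ideal.IsPrime.eq_of_forall_mem_apply_eq_zero {P : Ideal C(X, 𝕜)}
    (hP : P.IsPrime) {x y : X} (hx : ∀ f ∈ P, f x = 0) (hy : ∀ f ∈ P, f y = 0) : x = y := by
  by_contra hxy
  obtain ⟨f, g, hfg, hfx, hgy⟩ := exists_mul_eq_zero_apply_ne_zero (𝕜 := 𝕜) hxy
  rcases hP.mem_or_mem (hfg ▸ P.zero_mem) with hf | hg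
  · exact hfx (hx f hf)
  · exact hgy (hy g hg)

end ContinuousMap

theorem stmt9 (P : Ideal R01) (hP : P.IsPrime) :
    ∃! x : I01, ∀ f ∈ P, f x = 0 := by
  obtain ⟨x, hx⟩ := ContinuousMap.exists_forall_mem_apply_eq_zero hP.ne_top
  exact ⟨x, hx, fun y hy => hP.eq_of_forall_mem_apply_eq_zero hy hx⟩
end

section
/- There exists a prime ideal P of C([0,1], ℝ) and a point γ ∈ [0,1] such that P is strictly contained in M_γ = {f : f(γ) = 0}. -/
/-!
Let `S` be the multiplicative set of functions vanishing nowhere on some punctured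
neighbourhood of `0`. It misses `0`, contains every `f` with `f 0 ≠ 0`, and contains the
coordinate `t ↦ t ∈ M₀`. A prime ideal disjoint from `S` therefore lies in `M₀` and misses
the coordinate.
-/

open Set Polynomial

open Filter Topology

theorem Ideal.exists_isPrime_lt_of_submonoid {A : Type*} [CommRing A] (S : Submonoid A)
    (M : Ideal A) (hS : (0 : A) ∉ S) (hMS : ∀ a ∉ M, a ∈ S) {g : A} (hgM : g ∈ M)
    (hgS : g ∈ S) : ∃ P : Ideal A, P.IsPrime ∧ P < M := by
  have hdisj : Disjoint ((⊥ : Ideal A) : Set A) S := by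
    simpa [Set.disjoint_singleton_left] using hS
  obtain ⟨P, hP, -, hPS⟩ := Ideal.exists_le_prime_disjoint ⊥ S hdisj
  have hPM : P ≤ M := fun a haP =>
    by_contra fun haM => hPS.notMem_of_mem_left haP (hMS a haM)
  exact ⟨P, hP, lt_of_le_of_ne hPM fun h => hPS.notMem_of_mem_left (h ▸ hgM) hgS⟩

namespace ContinuousMap

variable {X R : Type*} [TopologicalSpace X] [MonoidWithZero R] [NoZeroDivisors R]
  [Nontrivial R] [TopologicalSpace R] [ContinuousMul R]

def eventuallyNeZero (l : Filter X) : Submonoid C(X, R) where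
  carrier := {f | ∀ᶠ x in l, f x ≠ 0}
  one_mem' := by simp
  mul_mem' hf hg := (hf.and hg).mono fun _ h => mul_ne_zero h.1 h.2

theorem zero_notMem_eventuallyNeZero (l : Filter X) [l.NeBot] :
    (0 : C(X, R)) ∉ eventuallyNeZero l := by
  simpa [eventuallyNeZero] using NeBot.ne ‹_›

theorem mem_eventuallyNeZero_of_ne_zero [T1Space R] {l : Filter X} {x : X} (hl : l ≤ 𝓝 x)
    {f : C(X, R)} (hf : f x ≠ 0) : f ∈ eventuallyNeZero l :=
  hl (f.continuous.continuousAt.eventually_ne hf)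

end ContinuousMap

theorem stmt11 : ∃ (P : Ideal R01) (γ : I01), P.IsPrime ∧ P < RingHom.ker (evalHom γ) := by
  let γ₀ : I01 := ⟨0, by norm_num⟩
  let coord : R01 := ⟨Subtype.val, continuous_subtype_val⟩
  have hcoord : coord ∈ ContinuousMap.eventuallyNeZero (𝓝[≠] γ₀) :=
    eventually_nhdsWithin_of_forall fun _ ht h => ht (Subtype.ext h)
  obtain ⟨P, hP, hPM⟩ := Ideal.exists_isPrime_lt_of_submonoid _ (RingHom.ker (evalHom γ₀))
    (ContinuousMap.zero_notMem_eventuallyNeZero _)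
    (fun _ hf => ContinuousMap.mem_eventuallyNeZero_of_ne_zero nhdsWithin_le_nhds hf)
    (g := coord) rfl hcoord
  exact ⟨P, γ₀, hP, hPM⟩
end
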